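/- Under the decomposition E[⟨x_k - x_⋆, v_ℓ⟩] = E[⟨x_k - x̂_k, v_ℓ⟩] + E[⟨x̂_k - x_⋆, v_ℓ⟩] of the REK iterate, where x̂_k = x_{k-1} - ((A^{(i)} x_{k-1} - A^{(i)} x_⋆)/||A^{(i)}||^2)(A^{(i)})^T is the one-step RK update for A x = A x_⋆ from x_{k-1}, the first term satisfies E[⟨x_k - x̂_k, v_ℓ⟩] = (1/||A||_F^2)(1 - σ_ℓ^2/||A||_F^2)^k ⟨b - A x_⋆ - z_0, A v_ℓ⟩. -/

import Mathlib

open Matrix BigOperators Finset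

noncomputable def frob2 {m n : ℕ} (A : Matrix (Fin m) (Fin n) ℝ) : ℝ :=
  ∑ i, ∑ j, (A i j) ^ 2

noncomputable def colNorm2 {m n : ℕ} (A : Matrix (Fin m) (Fin n) ℝ) (j : Fin n) : ℝ :=
  ∑ i, (A i j) ^ 2

noncomputable def rowNorm2 {m n : ℕ} (A : Matrix (Fin m) (Fin n) ℝ) (i : Fin m) : ℝ :=
  ∑ j, (A i j) ^ 2

noncomputable def colStep {m n : ℕ} (A : Matrix (Fin m) (Fin n) ℝ) (j : Fin n)
    (z : Fin m → ℝ) : Fin m → ℝ :=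
  z - ((Aᵀ j ⬝ᵥ z) / colNorm2 A j) • Aᵀ j

/-- One REK step: first an RK step on `Aᵀ z = 0` using column `j = p.1`, then an RK
step on `A x = b - z_k` using row `i = p.2` (with the freshly updated `z`). -/
noncomputable def rekStep {m n : ℕ} (A : Matrix (Fin m) (Fin n) ℝ)
    (b : Fin m → ℝ) (p : Fin n × Fin m) (s : (Fin m → ℝ) × (Fin n → ℝ)) :
    (Fin m → ℝ) × (Fin n → ℝ) :=
  let z' := colStep A p.1 s.1
  (z', s.2 - ((A p.2 ⬝ᵥ s.2 - b p.2 + z' p.2) / rowNorm2 A p.2) • A p.2)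

/-- REK iterates: the head of the list is the pair of indices of the most recent step. -/
noncomputable def rekIter {m n : ℕ} (A : Matrix (Fin m) (Fin n) ℝ)
    (b : Fin m → ℝ) (s0 : (Fin m → ℝ) × (Fin n → ℝ)) :
    List (Fin n × Fin m) → (Fin m → ℝ) × (Fin n → ℝ)
  | [] => s0
  | p :: l => rekStep A b p (rekIter A b s0 l)

/-- Probability of choosing the index pair `p` at a given REK step. -/
noncomputable def rekProb {m n : ℕ} (A : Matrix (Fin m) (Fin n) ℝ)
    (p : Fin n × Fin m) : ℝ :=
  (colNorm2 A p.1 / frob2 A) * (rowNorm2 A p.2 / frob2 A)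

/-!
Write `r = b - A xs`, so `Aᵀ r = 0`. From the same `x_{k-1}`, the REK row step and the RK step
for `A x = A xs` differ by `((r - z_k)_i / ‖A_i‖²) A_i`, so averaging over the row `i` leaves
`⟨r - z_k, A v⟩ / ‖A‖_F²`. As `r ⊥ range A`, the error `r - z` is moved by the same column
steps as `z`, and since `A v` is an eigenvector of `A Aᵀ` for `σ²`, each column step multiplies
`⟨r - z, A v⟩` by `1 - σ² / ‖A‖_F²` in expectation.
-/

theorem Fintype.sum_prod_mul_fin_succ {X : Type*} [Fintype X] (w : X → ℝ) (k : ℕ)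
    (f : (Fin (k + 1) → X) → ℝ) :
    ∑ ω : Fin (k + 1) → X, (∏ t, w (ω t)) * f ω
      = ∑ ω : Fin k → X, (∏ t, w (ω t)) * ∑ p, w p * f (Fin.cons p ω) := by
  rw [← (Fin.consEquiv fun _ => X).sum_comp, Fintype.sum_prod_type, Finset.sum_comm]
  refine Finset.sum_congr rfl fun ω _ => ?_
  rw [Finset.mul_sum]
  refine Finset.sum_congr rfl fun p _ => ?_
  change (∏ t, w ((Fin.cons p ω : Fin (k + 1) → X) t)) * f (Fin.cons p ω) = _
  simp only [Fin.prod_univ_succ, Fin.cons_zero, Fin.cons_succ]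
  ring

section REK

variable {m n : ℕ} (A : Matrix (Fin m) (Fin n) ℝ)

theorem sum_rowNorm2 : ∑ i, rowNorm2 A i = frob2 A := rfl

theorem sum_colNorm2 : ∑ j, colNorm2 A j = frob2 A := Finset.sum_comm

theorem rowNorm2_eq_dotProduct (i : Fin m) : rowNorm2 A i = A i ⬝ᵥ A i := by
  simp only [rowNorm2, dotProduct, sq]

theorem rowNorm2_eq_zero_iff (i : Fin m) : rowNorm2 A i = 0 ↔ A i = 0 := by
  rw [rowNorm2_eq_dotProduct, dotProduct_self_eq_zero]

theorem frob2_ne_zero (hA : A ≠ 0) : frob2 A ≠ 0 := by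
  obtain ⟨i, hi⟩ : ∃ i, A i ≠ 0 := by
    by_contra! h
    exact hA (funext h)
  have hpos : 0 < rowNorm2 A i :=
    lt_of_le_of_ne (Finset.sum_nonneg fun _ _ => sq_nonneg _)
      (Ne.symm ((rowNorm2_eq_zero_iff A i).not.mpr hi))
  rw [← sum_rowNorm2]
  exact (Finset.sum_pos' (fun _ _ => Finset.sum_nonneg fun _ _ => sq_nonneg _)
    ⟨i, Finset.mem_univ _, hpos⟩).ne'

theorem sum_rekProb_mul (g : Fin n × Fin m → ℝ) :
    ∑ p, rekProb A p * g p
      = ∑ j, colNorm2 A j / frob2 A * ∑ i, rowNorm2 A i / frob2 A * g (j, i) := by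
  simp only [Fintype.sum_prod_type, Finset.mul_sum, rekProb, mul_assoc]

theorem sum_rowNorm2_mul_div_mul_dotProduct (w : Fin m → ℝ) (v : Fin n → ℝ) :
    ∑ i, rowNorm2 A i / frob2 A * (w i / rowNorm2 A i * (A i ⬝ᵥ v))
      = 1 / frob2 A * (w ⬝ᵥ (A *ᵥ v)) := by
  rw [dotProduct, Finset.mul_sum]
  refine Finset.sum_congr rfl fun i _ => ?_
  by_cases hi : rowNorm2 A i = 0
  · simp [(rowNorm2_eq_zero_iff A i).mp hi, mulVec]
  · rw [mulVec, dotProduct]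
    field_simp

theorem sum_colNorm2_mul_colStep_dotProduct (hF : frob2 A ≠ 0) {σ : ℝ} {v : Fin n → ℝ}
    (hv : Aᵀ *ᵥ (A *ᵥ v) = σ ^ 2 • v) (z : Fin m → ℝ) :
    ∑ j, colNorm2 A j / frob2 A * (colStep A j z ⬝ᵥ (A *ᵥ v))
      = (1 - σ ^ 2 / frob2 A) * (z ⬝ᵥ (A *ᵥ v)) := by
  have hcol : ∀ j, colNorm2 A j / frob2 A * (colStep A j z ⬝ᵥ (A *ᵥ v))
      = colNorm2 A j / frob2 A * (z ⬝ᵥ (A *ᵥ v)) - σ ^ 2 / frob2 A * ((Aᵀ j ⬝ᵥ z) * v j) := by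
    intro j
    have hAv : Aᵀ j ⬝ᵥ (A *ᵥ v) = σ ^ 2 * v j := congrFun hv j
    rw [colStep, sub_dotProduct, smul_dotProduct, hAv, smul_eq_mul]
    by_cases hj : colNorm2 A j = 0
    · have hAj : Aᵀ j = 0 := (rowNorm2_eq_zero_iff Aᵀ j).mp hj
      simp [hj, hAj]
    · field_simp
  have hsum : ∑ j, (Aᵀ j ⬝ᵥ z) * v j = z ⬝ᵥ (A *ᵥ v) := by
    rw [dotProduct_mulVec, ← mulVec_transpose]
    rfl
  rw [Finset.sum_congr rfl fun j _ => hcol j, Finset.sum_sub_distrib, ← Finset.sum_mul,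
    ← Finset.sum_div, sum_colNorm2, div_self hF, ← Finset.mul_sum, hsum]
  ring

theorem sub_colStep {r : Fin m → ℝ} (hr : Aᵀ *ᵥ r = 0) (j : Fin n) (z : Fin m → ℝ) :
    r - colStep A j z = colStep A j (r - z) := by
  have hrj : Aᵀ j ⬝ᵥ r = 0 := congrFun hr j
  simp only [colStep, dotProduct_sub, hrj, zero_sub, neg_div, neg_smul]
  abel

variable (b : Fin m → ℝ)

theorem rekIter_ofFn_cons (s0 : (Fin m → ℝ) × (Fin n → ℝ)) {k : ℕ} (p : Fin n × Fin m)
    (ω : Fin k → Fin n × Fin m) :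
    rekIter A b s0 (List.ofFn (Fin.cons p ω)) = rekStep A b p (rekIter A b s0 (List.ofFn ω)) := by
  simp [List.ofFn_succ, rekIter]

theorem rekStep_snd_sub_dotProduct (xs : Fin n → ℝ) (p : Fin n × Fin m)
    (s : (Fin m → ℝ) × (Fin n → ℝ)) (v : Fin n → ℝ) :
    ((rekStep A b p s).2 - (s.2 - ((A p.2 ⬝ᵥ (s.2 - xs)) / rowNorm2 A p.2) • A p.2)) ⬝ᵥ v
      = (b - A *ᵥ xs - (rekStep A b p s).1) p.2 / rowNorm2 A p.2 * (A p.2 ⬝ᵥ v) := by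
  simp only [rekStep, sub_dotProduct, smul_dotProduct, dotProduct_sub, smul_eq_mul,
    Pi.sub_apply, mulVec]
  ring

variable {A} (hF : frob2 A ≠ 0) {σ : ℝ} {v : Fin n → ℝ} (hv : Aᵀ *ᵥ (A *ᵥ v) = σ ^ 2 • v)
include hF hv

theorem sum_rekProb_mul_sub_rekStep_fst_dotProduct {r : Fin m → ℝ} (hr : Aᵀ *ᵥ r = 0)
    (s : (Fin m → ℝ) × (Fin n → ℝ)) :
    ∑ p, rekProb A p * ((r - (rekStep A b p s).1) ⬝ᵥ (A *ᵥ v))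
      = (1 - σ ^ 2 / frob2 A) * ((r - s.1) ⬝ᵥ (A *ᵥ v)) := by
  have hrow : ∑ i, rowNorm2 A i / frob2 A = 1 := by
    rw [← Finset.sum_div, sum_rowNorm2, div_self hF]
  simp only [sum_rekProb_mul, ← Finset.sum_mul, hrow, one_mul, rekStep, sub_colStep A hr]
  exact sum_colNorm2_mul_colStep_dotProduct A hF hv _

theorem sum_prod_rekProb_mul_sub_rekIter_fst_dotProduct {r : Fin m → ℝ} (hr : Aᵀ *ᵥ r = 0)
    (s0 : (Fin m → ℝ) × (Fin n → ℝ)) (k : ℕ) :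
    ∑ ω : Fin k → Fin n × Fin m,
        (∏ t, rekProb A (ω t)) * ((r - (rekIter A b s0 (List.ofFn ω)).1) ⬝ᵥ (A *ᵥ v))
      = (1 - σ ^ 2 / frob2 A) ^ k * ((r - s0.1) ⬝ᵥ (A *ᵥ v)) := by
  induction k with
  | zero => simp [rekIter]
  | succ k ih =>
    simp only [Fintype.sum_prod_mul_fin_succ, rekIter_ofFn_cons,
      sum_rekProb_mul_sub_rekStep_fst_dotProduct b hF hv hr,
      mul_left_comm _ (1 - σ ^ 2 / frob2 A)]
    rw [← Finset.mul_sum, ih, pow_succ]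
    ring

theorem sum_rekProb_mul_rekStep_snd_sub_dotProduct {xs : Fin n → ℝ}
    (hls : Aᵀ *ᵥ (b - A *ᵥ xs) = 0) (s : (Fin m → ℝ) × (Fin n → ℝ)) :
    ∑ p, rekProb A p *
        (((rekStep A b p s).2 - (s.2 - ((A p.2 ⬝ᵥ (s.2 - xs)) / rowNorm2 A p.2) • A p.2)) ⬝ᵥ v)
      = 1 / frob2 A * (1 - σ ^ 2 / frob2 A) * ((b - A *ᵥ xs - s.1) ⬝ᵥ (A *ᵥ v)) := by
  simp only [rekStep_snd_sub_dotProduct, sum_rekProb_mul, sum_rowNorm2_mul_div_mul_dotProduct]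
  simp only [rekStep, sub_colStep A hls, mul_left_comm _ (1 / frob2 A)]
  rw [← Finset.mul_sum, sum_colNorm2_mul_colStep_dotProduct A hF hv, mul_assoc]

end REK

theorem rek_first_term_expectation_general {m n : ℕ}
    (A : Matrix (Fin m) (Fin n) ℝ) (hA : A ≠ 0)
    (b : Fin m → ℝ) (xs : Fin n → ℝ)
    (hls : Aᵀ *ᵥ (b - A *ᵥ xs) = 0)
    (x0 : Fin n → ℝ)
    (z0 : Fin m → ℝ)
    (σ : ℝ) (v : Fin n → ℝ)
    (hv : Aᵀ *ᵥ (A *ᵥ v) = σ ^ 2 • v)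
    (k : ℕ) (hk : 0 < k) :
    ∑ ω : Fin k → Fin n × Fin m,
        (∏ t, rekProb A (ω t)) *
          (((rekIter A b (z0, x0) (List.ofFn ω)).2
              - ((rekIter A b (z0, x0) ((List.ofFn ω).tail)).2
                  - ((A (ω ⟨0, hk⟩).2 ⬝ᵥ
                        ((rekIter A b (z0, x0) ((List.ofFn ω).tail)).2 - xs))
                      / rowNorm2 A (ω ⟨0, hk⟩).2) • A (ω ⟨0, hk⟩).2)) ⬝ᵥ v)
      = (1 / frob2 A) * (1 - σ ^ 2 / frob2 A) ^ k
          * ((b - A *ᵥ xs - z0) ⬝ᵥ (A *ᵥ v)) := by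
  have hF := frob2_ne_zero A hA
  obtain ⟨k, rfl⟩ := Nat.exists_eq_add_one_of_ne_zero hk.ne'
  simp only [Fintype.sum_prod_mul_fin_succ, Fin.zero_eta, Fin.cons_zero, List.ofFn_succ,
    Fin.cons_succ, List.tail_cons, rekIter]
  simp only [sum_rekProb_mul_rekStep_snd_sub_dotProduct b hF hv hls,
    mul_left_comm _ (1 / frob2 A * (1 - σ ^ 2 / frob2 A))]
  rw [← Finset.mul_sum, sum_prod_rekProb_mul_sub_rekIter_fst_dotProduct b hF hv hls, pow_succ]
  ring

/-- the first term of the REK error decomposition. Here, for a sample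
`ω` of the first `k` index pairs (the head entry `ω 0` being the `k`-th, most
recent, step), `x_k` is the REK iterate, and `x̂_k` is the one-step RK update for
`A x = A x⋆` from `x_{k-1}` using the same row index as the `k`-th REK step. Then
`E[⟨x_k - x̂_k, vℓ⟩] = (1/‖A‖_F²)(1-σℓ²/‖A‖_F²)^k ⟨b - A x⋆ - z_0, A vℓ⟩`. -/
theorem rek_first_term_expectation {m n : ℕ}
    (A : Matrix (Fin m) (Fin n) ℝ) (hA : A ≠ 0)
    (b : Fin m → ℝ) (xs : Fin n → ℝ)
    (hls : Aᵀ *ᵥ (b - A *ᵥ xs) = 0) (hxs : ∃ y, xs = Aᵀ *ᵥ y)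
    (x0 : Fin n → ℝ) (hx0 : ∃ u, x0 = Aᵀ *ᵥ u)
    (z0 : Fin m → ℝ) (hz0 : ∃ y, z0 = b + A *ᵥ y)
    (σ : ℝ) (hσ : 0 ≤ σ) (v : Fin n → ℝ)
    (hv : Aᵀ *ᵥ (A *ᵥ v) = σ ^ 2 • v)
    (k : ℕ) (hk : 0 < k) :
    ∑ ω : Fin k → Fin n × Fin m,
        (∏ t, rekProb A (ω t)) *
          (((rekIter A b (z0, x0) (List.ofFn ω)).2
              - ((rekIter A b (z0, x0) ((List.ofFn ω).tail)).2
                  - ((A (ω ⟨0, hk⟩).2 ⬝ᵥ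
                        ((rekIter A b (z0, x0) ((List.ofFn ω).tail)).2 - xs))
                      / rowNorm2 A (ω ⟨0, hk⟩).2) • A (ω ⟨0, hk⟩).2)) ⬝ᵥ v)
      = (1 / frob2 A) * (1 - σ ^ 2 / frob2 A) ^ k
          * ((b - A *ᵥ xs - z0) ⬝ᵥ (A *ᵥ v)) :=
  rek_first_term_expectation_general A hA b xs hls x0 z0 σ v hv k hk
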